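/- Let n, L ∈ ℕ with n ≥ 1, let b : Fin n → ℕ with b i ≥ 1 for all i and ∑ i, b i = 2L, and let b̄ = max_i b i. Define T = (2·n·b̄ + 1)·L + 1, and for a subset I ⊆ Fin n define τ(I) = ∑_{i ∈ I} n·b̄·(b i) + ∑_{i ∉ I} (n·b̄ + 1)·(b i). Then τ(I) = (T - 1) - (∑_{i ∈ I} b i - L) as integers; consequently, τ(I) ≤ T - 1 and τ(Iᶜ) ≤ T - 1 hold simultaneously if and only if ∑_{i ∈ I} b i = L. -/
import Mathlib


theorem stmt_0 (n L : ℕ) (hn : 1 ≤ n) (b : Fin n → ℕ) (hb : ∀ i, 1 ≤ b i)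
    (hsum : ∑ i, b i = 2 * L)
    (bbar : ℕ) (hbbar : bbar = Finset.univ.sup b)
    (T : ℕ) (hT : T = (2 * n * bbar + 1) * L + 1)
    (τ : Finset (Fin n) → ℕ)
    (hτ : ∀ I : Finset (Fin n),
      τ I = ∑ i ∈ I, n * bbar * b i + ∑ i ∈ Iᶜ, (n * bbar + 1) * b i) :
    ∀ I : Finset (Fin n),
      ((τ I : ℤ) = ((T : ℤ) - 1) - ((∑ i ∈ I, (b i : ℤ)) - (L : ℤ))) ∧
      ((τ I ≤ T - 1 ∧ τ Iᶜ ≤ T - 1) ↔ ∑ i ∈ I, b i = L) := by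
  have key : ∀ J : Finset (Fin n),
      (τ J : ℤ) = ((T : ℤ) - 1) - ((∑ i ∈ J, (b i : ℤ)) - (L : ℤ)) := by
    intro J
    have hJ : ∑ i ∈ J, b i + ∑ i ∈ Jᶜ, b i = 2 * L := by
      rw [Finset.sum_add_sum_compl]; exact hsum
    rw [hτ J, hT]
    have h1 : ∑ i ∈ J, n * bbar * b i = n * bbar * ∑ i ∈ J, b i := by
      rw [Finset.mul_sum]
    have h2 : ∑ i ∈ Jᶜ, (n * bbar + 1) * b i = (n * bbar + 1) * ∑ i ∈ Jᶜ, b i := by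
      rw [Finset.mul_sum]
    rw [h1, h2]
    have hJ' : (∑ i ∈ J, (b i : ℤ)) + (∑ i ∈ Jᶜ, (b i : ℤ)) = 2 * L := by
      exact_mod_cast hJ
    push_cast
    linear_combination ((n:ℤ)*bbar+1) * hJ'
  intro I
  refine ⟨key I, ?_⟩
  have kI := key I
  have kIc := key Iᶜ
  rw [show (∑ i ∈ I, (b i : ℤ)) = ((∑ i ∈ I, b i : ℕ) : ℤ) by push_cast; ring] at kI
  rw [show (∑ i ∈ Iᶜ, (b i : ℤ)) = ((∑ i ∈ Iᶜ, b i : ℕ) : ℤ) by push_cast; ring] at kIc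
  have hsplit : ∑ i ∈ I, b i + ∑ i ∈ Iᶜ, b i = 2 * L := by
    rw [Finset.sum_add_sum_compl]; exact hsum
  have hT1 : 1 ≤ T := by omega
  omega
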